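/- For every positive integer k there exists a constant c_k > 0 such that for all positive integers n₁, …, n_k and all signs ε₁, …, ε_k ∈ {+1, −1}, if ∑_{i=1}^k ε_i·√(n_i) ≠ 0 then |∑_{i=1}^k ε_i·√(n_i)| ≥ c_k · (max_{1 ≤ i ≤ k} n_i)^{(1 − 2^{k−1})/2}. -/

import Mathlib

/-!
If `x₀, …, xₙ` have integral squares, the product `signProd [x₁, …, xₙ] x₀` of the `2ⁿ` signed
sums `x₀ ± x₁ ± ⋯ ± xₙ` is an even polynomial in `x₀` with integer coefficients, hence an integer.
One factor is `S = x₀ + ⋯ + xₙ` and the other `2ⁿ - 1` factors are `O(max |xᵢ|)`, so a nonzero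
product forces `|S| ≳ (max |xᵢ|)^(1 - 2ⁿ)`. If the product vanishes, some signed sum is zero,
and then `S` is twice a sum of at most `n` of the `xᵢ`, to which induction on the number of terms
applies.
-/

open Polynomial Real

/-- `signProd [x₁, …, xₙ] t = ∏_{σ ∈ {±1}ⁿ} (t + σ₁ x₁ + ⋯ + σₙ xₙ)`. -/
def signProd {R : Type*} [CommRing R] : List R → R → R
  | [], t => t
  | x :: L, t => signProd L (t + x) * signProd L (t - x)

section Algebra

variable {R : Type*} [CommRing R]

theorem signProd_cons (x : R) (L : List R) (t : R) :
    signProd (x :: L) t = signProd L (t + x) * signProd L (t - x) := rfl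

theorem exists_aeval_add_eq_and_aeval_sub_eq (p : ℤ[X]) {x : R} {z : ℤ} (hx : x ^ 2 = z) :
    ∃ A B : ℤ[X], ∀ t : R,
      aeval (t + x) p = aeval t A + x * aeval t B ∧
      aeval (t - x) p = aeval t A - x * aeval t B := by
  induction p using Polynomial.induction_on with
  | C a => exact ⟨C a, 0, fun t => by simp⟩
  | add p q hp hq =>
    obtain ⟨A₁, B₁, h₁⟩ := hp
    obtain ⟨A₂, B₂, h₂⟩ := hq
    refine ⟨A₁ + A₂, B₁ + B₂, fun t => ?_⟩
    simp only [map_add, (h₁ t).1, (h₁ t).2, (h₂ t).1, (h₂ t).2]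
    constructor <;> ring
  | monomial n a h =>
    obtain ⟨A, B, hAB⟩ := h
    refine ⟨X * A + C z * B, A + X * B, fun t => ?_⟩
    have hsucc : ∀ u : R, aeval u (C a * X ^ (n + 1)) = aeval u (C a * X ^ n) * u := by
      intro u; simp only [map_mul, map_pow, aeval_X]; ring
    rw [hsucc, hsucc, (hAB t).1, (hAB t).2]
    simp only [map_add, map_mul, aeval_X, eq_intCast, map_intCast, ← hx]
    constructor <;> ring

theorem exists_aeval_eq_signProd (L : List R) (hL : ∀ x ∈ L, ∃ m : ℤ, x ^ 2 = m) :
    ∃ p : ℤ[X], ∀ t : R, aeval t p = signProd L t := by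
  induction L with
  | nil => exact ⟨X, fun t => by simp [signProd]⟩
  | cons x L ih =>
    obtain ⟨p, hp⟩ := ih fun y hy => hL y (List.mem_cons_of_mem x hy)
    obtain ⟨z, hz⟩ := hL x List.mem_cons_self
    obtain ⟨A, B, hAB⟩ := exists_aeval_add_eq_and_aeval_sub_eq p hz
    refine ⟨A * A - C z * (B * B), fun t => ?_⟩
    rw [signProd_cons, ← hp, ← hp, (hAB t).1, (hAB t).2]
    simp only [map_sub, map_mul, eq_intCast, map_intCast, ← hz]
    ring

theorem signProd_neg {L : List R} (hL : L ≠ []) (t : R) : signProd L (-t) = signProd L t := by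
  induction L generalizing t with
  | nil => exact absurd rfl hL
  | cons x L ih =>
    rcases eq_or_ne L [] with rfl | hL'
    · simp only [signProd]; ring
    · rw [signProd_cons, signProd_cons, show -t + x = -(t - x) by ring,
        show -t - x = -(t + x) by ring, ih hL', ih hL', mul_comm]

theorem exists_signProd_eq_intCast [IsDomain R] [CharZero R] {L : List R} (hL : L ≠ [])
    (hsq : ∀ x ∈ L, ∃ m : ℤ, x ^ 2 = m) {t : R} (ht : ∃ m : ℤ, t ^ 2 = m) :
    ∃ z : ℤ, signProd L t = z := by
  obtain ⟨p, hp⟩ := exists_aeval_eq_signProd L hsq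
  obtain ⟨m, hm⟩ := ht
  obtain ⟨A, B, hAB⟩ := exists_aeval_add_eq_and_aeval_sub_eq p hm
  -- evenness kills the odd part `t * B(0)`
  refine ⟨A.coeff 0, mul_left_cancel₀ (two_ne_zero (α := R)) ?_⟩
  calc 2 * signProd L t = signProd L t + signProd L (-t) := by rw [signProd_neg hL]; ring
    _ = 2 * aeval 0 A := by
      rw [← hp, ← hp, ← zero_sub, (hAB 0).2, ← zero_add t, (hAB 0).1]; ring
    _ = 2 * A.coeff 0 := by simp [aeval_def, eval₂_at_zero]

theorem exists_sublist_two_mul_sum_eq_of_signProd_eq_zero [NoZeroDivisors R] {L : List R}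
    {t : R} (h : signProd L t = 0) : ∃ L' : List R, L'.Sublist L ∧ t + L.sum = 2 * L'.sum := by
  induction L generalizing t with
  | nil => exact ⟨[], List.Sublist.refl _, by simpa [signProd] using h⟩
  | cons x L ih =>
    rcases mul_eq_zero.mp h with h | h
    · obtain ⟨L', hsub, heq⟩ := ih h
      exact ⟨L', hsub.cons x, by rw [List.sum_cons, ← add_assoc, heq]⟩
    · obtain ⟨L', hsub, heq⟩ := ih h
      refine ⟨x :: L', hsub.cons_cons x, ?_⟩
      rw [List.sum_cons, List.sum_cons]
      linear_combination heq

end Algebra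

section Order

variable {R : Type*} [CommRing R] [LinearOrder R] [IsStrictOrderedRing R]

theorem abs_signProd_le (L : List R) (t : R) :
    |signProd L t| ≤ (|t| + (L.map abs).sum) ^ 2 ^ L.length := by
  induction L generalizing t with
  | nil => simp [signProd]
  | cons x L ih =>
    have hs : 0 ≤ (L.map abs).sum := List.sum_nonneg (by simp)
    have hle : ∀ u, |u| ≤ |t| + |x| →
        |signProd L u| ≤ (|t| + |x| + (L.map abs).sum) ^ 2 ^ L.length :=
      fun u hu => (ih u).trans (pow_le_pow_left₀ (by positivity) (by linarith) _)
    rw [signProd_cons, abs_mul, List.map_cons, List.sum_cons, List.length_cons, pow_succ, pow_mul,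
      sq, ← add_assoc]
    exact mul_le_mul (hle _ (abs_add_le t x)) (hle _ (abs_sub t x)) (abs_nonneg _)
      (by positivity)

theorem exists_signProd_eq_add_sum_mul (L : List R) (t : R) :
    ∃ r : R, signProd L t = (t + L.sum) * r ∧
      |r| ≤ (|t| + (L.map abs).sum) ^ (2 ^ L.length - 1) := by
  induction L generalizing t with
  | nil => exact ⟨1, by simp [signProd], by simp⟩
  | cons x L ih =>
    obtain ⟨r, hr, hrle⟩ := ih (t + x)
    have hs : 0 ≤ (L.map abs).sum := List.sum_nonneg (by simp)
    refine ⟨r * signProd L (t - x), by rw [signProd_cons, hr, List.sum_cons]; ring, ?_⟩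
    have hexp : 2 ^ (L.length + 1) - 1 = (2 ^ L.length - 1) + 2 ^ L.length := by
      have := Nat.one_le_two_pow (n := L.length); rw [pow_succ]; omega
    rw [abs_mul, List.map_cons, List.sum_cons, List.length_cons, hexp, pow_add, ← add_assoc]
    refine mul_le_mul (hrle.trans (pow_le_pow_left₀ (by positivity) ?_ _))
      ((abs_signProd_le L _).trans (pow_le_pow_left₀ (by positivity) ?_ _)) (abs_nonneg _)
      (by positivity)
    · linarith [abs_add_le t x]
    · linarith [abs_sub t x]

end Order

section OrderedField

variable {R : Type*} [Field R] [LinearOrder R] [IsStrictOrderedRing R]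

theorem one_le_abs_of_sq_eq_intCast {x : R} (hx : x ≠ 0) {m : ℤ} (h : x ^ 2 = m) : 1 ≤ |x| := by
  by_contra! hlt
  have hm : (m : R) < 1 := by
    rw [← h, ← sq_abs]; exact pow_lt_one₀ (abs_nonneg x) hlt two_ne_zero
  have hm0 : (m : R) ≤ 0 := by exact_mod_cast Int.lt_add_one_iff.mp (by exact_mod_cast hm)
  exact hx (pow_eq_zero_iff two_ne_zero |>.mp (le_antisymm (h ▸ hm0) (sq_nonneg x)))

theorem one_le_abs_sum_mul_pow_of_signProd_ne_zero {x₀ : R} {L : List R} (hL : L ≠ [])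
    (hsq : ∀ x ∈ x₀ :: L, ∃ m : ℤ, x ^ 2 = m) {B : R} (hB : ∀ x ∈ x₀ :: L, |x| ≤ B)
    (h : signProd L x₀ ≠ 0) :
    1 ≤ |(x₀ :: L).sum| * ((L.length + 1) * B) ^ (2 ^ L.length - 1) := by
  obtain ⟨z, hz⟩ := exists_signProd_eq_intCast hL (fun x hx => hsq x (List.mem_cons_of_mem _ hx))
    (hsq x₀ List.mem_cons_self)
  obtain ⟨r, hr, hrle⟩ := exists_signProd_eq_add_sum_mul L x₀
  have habs : |x₀| + (L.map abs).sum ≤ (L.length + 1) * B := by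
    simpa using List.sum_le_card_nsmul ((x₀ :: L).map abs) B (by simpa using hB)
  calc (1 : R) ≤ |(z : R)| := by
        exact_mod_cast Int.one_le_abs (by rintro rfl; exact h (by simpa using hz))
    _ = |(x₀ :: L).sum| * |r| := by rw [← hz, hr, abs_mul, List.sum_cons]
    _ ≤ _ := by
      gcongr
      have hs : 0 ≤ (L.map abs).sum := List.sum_nonneg (by simp)
      exact hrle.trans (pow_le_pow_left₀ (by positivity) habs _)

theorem exists_pos_le_abs_sum_mul_pow (n : ℕ) :
    ∃ c : R, 0 < c ∧ ∀ L : List R, L.length ≤ n + 1 → (∀ x ∈ L, ∃ m : ℤ, x ^ 2 = m) →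
      ∀ B : R, 1 ≤ B → (∀ x ∈ L, |x| ≤ B) → L.sum ≠ 0 → c ≤ |L.sum| * B ^ (2 ^ n - 1) := by
  induction n with
  | zero =>
    refine ⟨1, one_pos, fun L hlen hsq B _ _ hsum => ?_⟩
    obtain _ | ⟨x, _ | ⟨y, L⟩⟩ := L
    · simp at hsum
    · obtain ⟨m, hm⟩ := hsq x List.mem_cons_self
      simpa using one_le_abs_of_sq_eq_intCast (by simpa using hsum) hm
    · simp at hlen
  | succ n ih =>
    obtain ⟨c, hc, hcL⟩ := ih
    refine ⟨min c (((n : R) + 2) ^ (2 ^ (n + 1) - 1))⁻¹, by positivity,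
      fun L hlen hsq B hB hLB hsum => ?_⟩
    have of_shorter : ∀ L' : List R, L' ⊆ L → L'.length ≤ n + 1 → L'.sum ≠ 0 →
        |L'.sum| ≤ |L.sum| →
        min c (((n : R) + 2) ^ (2 ^ (n + 1) - 1))⁻¹ ≤ |L.sum| * B ^ (2 ^ (n + 1) - 1) := by
      intro L' hsub hlen' hsum' hle
      calc min c _ ≤ c := min_le_left _ _
        _ ≤ |L'.sum| * B ^ (2 ^ n - 1) :=
          hcL L' hlen' (fun x hx => hsq x (hsub hx)) B hB (fun x hx => hLB x (hsub hx)) hsum'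
        _ ≤ |L.sum| * B ^ (2 ^ (n + 1) - 1) :=
          mul_le_mul hle (pow_le_pow_right₀ hB (by rw [pow_succ]; omega)) (by positivity)
            (abs_nonneg _)
    rcases le_or_gt L.length (n + 1) with hlen' | hlen'
    · exact of_shorter L (List.Subset.refl L) hlen' hsum le_rfl
    obtain _ | ⟨x₀, L₁⟩ := L
    · simp at hsum
    have hL₁ : L₁.length = n + 1 := by simp only [List.length_cons] at hlen hlen'; omega
    by_cases h : signProd L₁ x₀ = 0
    · obtain ⟨L', hsub, heq⟩ := exists_sublist_two_mul_sum_eq_of_signProd_eq_zero h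
      rw [List.sum_cons, heq] at hsum
      refine of_shorter L' (fun x hx => List.mem_cons_of_mem _ (hsub.subset hx))
        (hsub.length_le.trans hL₁.le) (right_ne_zero_of_mul hsum) ?_
      rw [List.sum_cons, heq, abs_mul, abs_two]
      linarith [abs_nonneg L'.sum]
    · have key :=
        one_le_abs_sum_mul_pow_of_signProd_ne_zero (by rintro rfl; simp at hL₁) hsq hLB h
      rw [hL₁] at key
      refine (min_le_right _ _).trans ((inv_le_iff_one_le_mul₀' (by positivity)).mpr ?_)
      calc (1 : R) ≤ _ := key
        _ = _ := by rw [mul_pow]; push_cast; ring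

end OrderedField

theorem Real.rpow_neg_natCast_div_two {x : ℝ} (hx : 0 ≤ x) (m : ℕ) :
    x ^ (-(m : ℝ) / 2) = (√x ^ m)⁻¹ := by
  rw [sqrt_eq_rpow, ← rpow_natCast, ← rpow_mul hx, ← rpow_neg hx]
  ring_nf

theorem signed_sqrt_sum_spacing :
    ∀ k : ℕ, 0 < k → ∃ c : ℝ, 0 < c ∧
      ∀ n : Fin k → ℕ, (∀ i, 0 < n i) →
        ∀ ε : Fin k → ℝ, (∀ i, ε i = 1 ∨ ε i = -1) →
          (∑ i, ε i * Real.sqrt (n i)) ≠ 0 →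
            c * ((Finset.univ.sup n : ℕ) : ℝ) ^ ((1 - (2 : ℝ) ^ (k - 1)) / 2) ≤
              |∑ i, ε i * Real.sqrt (n i)| := by
  intro k hk
  obtain ⟨c, hc, hcL⟩ := exists_pos_le_abs_sum_mul_pow (R := ℝ) (k - 1)
  refine ⟨c, hc, fun n hn ε hε hsum => ?_⟩
  set N : ℝ := ((Finset.univ.sup n : ℕ) : ℝ)
  have hn_le : ∀ i, (n i : ℝ) ≤ N := fun i => Nat.cast_le.mpr (Finset.le_sup (Finset.mem_univ i))
  have hN : 1 ≤ N := le_trans (by exact_mod_cast hn ⟨0, hk⟩) (hn_le ⟨0, hk⟩)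
  have hε_abs : ∀ i, |ε i| = 1 := fun i => by rcases hε i with h | h <;> simp [h]
  have hsq : ∀ i, (ε i * √(n i)) ^ 2 = (n i : ℤ) := fun i => by
    rw [mul_pow, ← sq_abs (ε i), hε_abs, one_pow, one_mul, sq_sqrt (Nat.cast_nonneg _)]; rfl
  have key := hcL (List.ofFn fun i => ε i * √(n i)) (by simp; omega)
    (by simpa [List.mem_ofFn] using fun i => ⟨_, hsq i⟩) √N (one_le_sqrt.mpr hN)
    (by
      simp only [List.mem_ofFn, forall_exists_index, forall_apply_eq_imp_iff]
      intro i
      rw [abs_mul, hε_abs, one_mul, abs_of_nonneg (sqrt_nonneg _)]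
      exact sqrt_le_sqrt (hn_le i))
    (by rwa [List.sum_ofFn])
  rw [List.sum_ofFn] at key
  have hexp : (1 - (2 : ℝ) ^ (k - 1)) / 2 = -((2 ^ (k - 1) - 1 : ℕ) : ℝ) / 2 := by
    push_cast [Nat.one_le_two_pow]; ring
  rw [hexp, rpow_neg_natCast_div_two (by positivity), ← div_eq_mul_inv,
    div_le_iff₀ (by positivity)]
  exact key
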